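/- arXiv:2212.01149 — 2 statements merged into one kernel-verified Lean document; each statement's English description precedes it below -/
import Mathlib

section
/- The event B_∞ that the causet has infinitely many breaks belongs to the σ-algebra 𝔐_b generated by the principal cylinder sets. -/
open MeasurableSpace MeasureTheory Set

/-- An (infinite) causal set: an irreflexive, transitive relation on ℕ
satisfying the natural-labeling condition `x ≺ y → x < y`.  The type of all
such causets plays the role of Ω. -/
structure Causet where
  rel : ℕ → ℕ → Prop
  irrefl : ∀ x, ¬ rel x x
  trans : ∀ x y z, rel x y → rel y z → rel x z
  lt_of_rel : ∀ x y, rel x y → x < y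

/-- A finite causet on ground-set `{0, …, n-1}` with natural labeling. -/
structure FinCauset (n : ℕ) where
  rel : ℕ → ℕ → Prop
  bounded : ∀ x y, rel x y → x < n ∧ y < n
  irrefl : ∀ x, ¬ rel x x
  trans : ∀ x y z, rel x y → rel y z → rel x z
  lt_of_rel : ∀ x y, rel x y → x < y

/-- The cylinder set of a finite causet `C` on `{0,…,n-1}`: all causets whose
restriction to `{0,…,n-1}` equals `C`. -/
def cyl {n : ℕ} (C : FinCauset n) : Set Causet :=
  { D | ∀ x y, x < n → y < n → (D.rel x y ↔ C.rel x y) }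

/-- The σ-algebra 𝔐 generated by all cylinder sets. -/
def cylAlgebra : MeasurableSpace Causet :=
  .generateFrom { E | ∃ n, 0 < n ∧ ∃ C : FinCauset n, E = cyl C }

/-- Order isomorphism between two (infinite) causets. -/
def Iso (C D : Causet) : Prop :=
  ∃ f : ℕ ≃ ℕ, ∀ x y, C.rel x y ↔ D.rel (f x) (f y)

/-- A set of causets is covariant if it is closed under order isomorphism. -/
def CovariantEvent (E : Set Causet) : Prop :=
  ∀ C D : Causet, Iso C D → C ∈ E → D ∈ E

/-- Membership in the σ-algebra R of covariant events: measurable w.r.t. 𝔐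
and closed under order isomorphism. -/
def MemR (E : Set Causet) : Prop :=
  MeasurableSet[cylAlgebra] E ∧ CovariantEvent E

/-- A stem of a causet: a finite down-set. -/
def IsStem (D : Causet) (A : Set ℕ) : Prop :=
  A.Finite ∧ ∀ x y, y ∈ A → D.rel x y → x ∈ A

/-- The stem-set of (the order of) the finite causet `C`: all causets
containing a stem order-isomorphic to `C`. -/
def stemSet {n : ℕ} (C : FinCauset n) : Set Causet :=
  { D | ∃ A : Set ℕ, IsStem D A ∧
      ∃ f : {x : ℕ // x < n} ≃ A,
        ∀ x y : {x : ℕ // x < n}, C.rel x.1 y.1 ↔ D.rel (f x).1 (f y).1 }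

/-- The collection S of all stem-sets. -/
def stemSets : Set (Set Causet) :=
  { E | ∃ n, 0 < n ∧ ∃ C : FinCauset n, E = stemSet C }

/-- The σ-algebra R(S) generated by the stem-sets. -/
def stemAlgebra : MeasurableSpace Causet := .generateFrom stemSets

/-- A rogue: a causet `U` for which there is a non-isomorphic causet `V`
belonging to exactly the same stem-sets. -/
def IsRogue (U : Causet) : Prop :=
  ∃ V : Causet, ¬ Iso U V ∧
    ∀ (n : ℕ) (C : FinCauset n), 0 < n → (V ∈ stemSet C ↔ U ∈ stemSet C)

/-- Θ: the set of rogues. -/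
def Theta : Set Causet := { U | IsRogue U }

/-- `A` is the past of a break of `D`: `(A, Aᶜ)` is a partition into nonempty
parts with every element of `A` below every element of `Aᶜ`. -/
def IsBreakPast (D : Causet) (A : Set ℕ) : Prop :=
  A.Nonempty ∧ Aᶜ.Nonempty ∧ ∀ a ∈ A, ∀ b ∈ Aᶜ, D.rel a b

/-- B_∞: the set of causets with infinitely many breaks. -/
def Binf : Set Causet := { D | { A : Set ℕ | IsBreakPast D A }.Infinite }

/-- `x` is a maximal element of the restriction of the finite causet `C`
to the elements `< k`. -/
def FMaximalBelow {n : ℕ} (C : FinCauset n) (k x : ℕ) : Prop :=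
  x < k ∧ ∀ y, y < k → ¬ C.rel x y

/-- A principal finite causet: it has a unique maximal element. -/
def Principal {n : ℕ} (C : FinCauset n) : Prop :=
  ∃! x, FMaximalBelow C n x

/-- 𝔐_b: the σ-algebra generated by the principal cylinder sets. -/
def principalCylAlgebra : MeasurableSpace Causet :=
  .generateFrom { E | ∃ n, ∃ C : FinCauset n, Principal C ∧ E = cyl C }

/-- Membership in R_b: covariant events containing all or none of the
causets with finitely many breaks. -/
def MemRb (E : Set Causet) : Prop :=
  MemR E ∧ (Binfᶜ ⊆ E ∨ Binfᶜ ⊆ Eᶜ)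

/-- `x` is a maximal element of the restriction of the causet `D` to `{0,…,n}`. -/
def RMaximal (D : Causet) (n x : ℕ) : Prop :=
  x ≤ n ∧ ∀ y, y ≤ n → ¬ D.rel x y

/-- 𝔉: causets all but finitely many of whose initial-segment restrictions
have at least two maximal elements. -/
def Ffin : Set Causet :=
  { D | ∃ m : ℕ, ∀ n, m < n →
      ∃ x y, x ≠ y ∧ RMaximal D n x ∧ RMaximal D n y }

/-- The restriction of the m-causet `D` to `{0,…,n-1}` equals the n-causet `C`. -/
def RestrEq {m n : ℕ} (D : FinCauset m) (C : FinCauset n) : Prop :=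
  ∀ x y, x < n → y < n → (D.rel x y ↔ C.rel x y)

/-- Γ_{C}: the causets containing `C` as a stem but containing no principal
causet of larger cardinality as a stem (i.e. `cyl C` minus the cylinder sets
of the principal causets extending `C`). -/
def Gamma {n : ℕ} (C : FinCauset n) : Set Causet :=
  cyl C \ { X | ∃ m, n < m ∧ ∃ D : FinCauset m, Principal D ∧ RestrEq D C ∧ X ∈ cyl D }

/-- Ŝ: the collection of principal stem-sets. -/
def principalStemSets : Set (Set Causet) :=
  { E | ∃ n, ∃ C : FinCauset n, Principal C ∧ E = stemSet C }

/-- R(Ŝ): the σ-algebra generated by the principal stem-sets. -/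
def principalStemAlgebra : MeasurableSpace Causet := .generateFrom principalStemSets

/-- `x` is a post of `D`: every other element is related to `x`. -/
def IsPost (D : Causet) (x : ℕ) : Prop :=
  ∀ y, y ≠ x → D.rel y x ∨ D.rel x y

/-- P_∞: the set of causets with infinitely many posts. -/
def Pinf : Set Causet := { D | { x | IsPost D x }.Infinite }

/-- A doubly principal finite causet: both it and its restriction to
`{0,…,n-2}` have a unique maximal element. -/
def DoublyPrincipal {n : ℕ} (C : FinCauset n) : Prop :=
  Principal C ∧ ∃! x, FMaximalBelow C (n - 1) x

/-- 𝔐_p: the σ-algebra generated by the doubly principal cylinder sets. -/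
def doublyPrincipalCylAlgebra : MeasurableSpace Causet :=
  .generateFrom { E | ∃ n, ∃ C : FinCauset n, DoublyPrincipal C ∧ E = cyl C }

/-- The σ-algebra generated by the doubly principal stem-sets. -/
def doublyPrincipalStemAlgebra : MeasurableSpace Causet :=
  .generateFrom { E | ∃ n, ∃ C : FinCauset n, DoublyPrincipal C ∧ E = stemSet C }


/-!
Since `x ≺ y` forces `x < y`, the past of a break is an initial segment `{0, …, k-1}`, so
`B_∞` is the event that `D` breaks at infinitely many `k`. Breaking at `k` is not visibly
an event of `𝔐_b`, but "the restriction of `D` to `{0, …, n}` is principal and splits at `k`" is.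
If `D` breaks at both `k` and `n`, this happens at `(k, n)`; conversely, if it happens
for infinitely many `n`, then `D` breaks at `k`. Hence `B_∞ = limsup_k limsup_n` of these
events.
-/

open Filter

theorem FinCauset.ext {n : ℕ} {C C' : FinCauset n}
    (h : ∀ x y, x < n → y < n → (C.rel x y ↔ C'.rel x y)) : C = C' := by
  have hrel : C.rel = C'.rel := by
    ext x y
    by_cases hxy : x < n ∧ y < n
    · exact h x y hxy.1 hxy.2
    · exact iff_of_false (fun hr => hxy (C.bounded x y hr)) (fun hr => hxy (C'.bounded x y hr))
  cases C
  cases C'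
  cases hrel
  rfl

instance (n : ℕ) : Countable (FinCauset n) :=
  Function.Injective.countable (f := fun (C : FinCauset n) (p : Fin n × Fin n) => C.rel p.1 p.2)
    fun _ _ h => FinCauset.ext fun x y hx hy => Iff.of_eq (congrFun h (⟨x, hx⟩, ⟨y, hy⟩))

def FinCauset.IsBreakAt {m : ℕ} (C : FinCauset m) (k : ℕ) : Prop :=
  ∀ a < k, ∀ b, k ≤ b → b < m → C.rel a b

namespace Causet

def IsBreakAt (D : Causet) (k : ℕ) : Prop :=
  ∀ a < k, ∀ b, k ≤ b → D.rel a b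

def restrict (D : Causet) (n : ℕ) : FinCauset n where
  rel x y := x < n ∧ y < n ∧ D.rel x y
  bounded _ _ h := ⟨h.1, h.2.1⟩
  irrefl x h := D.irrefl x h.2.2
  trans x y z hxy hyz := ⟨hxy.1, hyz.2.1, D.trans x y z hxy.2.2 hyz.2.2⟩
  lt_of_rel x y h := D.lt_of_rel x y h.2.2

variable {D : Causet}

theorem isBreakPast_Iio_iff {k : ℕ} : IsBreakPast D (Iio k) ↔ 0 < k ∧ D.IsBreakAt k := by
  simp only [IsBreakPast, IsBreakAt, compl_Iio, nonempty_Ici, mem_Iio, mem_Ici, true_and]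
  exact ⟨fun ⟨⟨_, ha⟩, h⟩ => ⟨Nat.zero_lt_of_lt ha, h⟩, fun ⟨hk, h⟩ => ⟨⟨0, hk⟩, h⟩⟩

theorem _root_.IsBreakPast.eq_Iio {A : Set ℕ} (h : IsBreakPast D A) : A = Iio (sInf Aᶜ) := by
  obtain ⟨-, hAc, hrel⟩ := h
  ext x
  refine ⟨fun hx => D.lt_of_rel x _ (hrel x hx _ (Nat.sInf_mem hAc)), fun hx => ?_⟩
  by_contra hxA
  exact Nat.notMem_of_lt_sInf hx hxA

theorem setOf_isBreakPast_eq_image :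
    {A | IsBreakPast D A} = Iio '' {k | 0 < k ∧ D.IsBreakAt k} := by
  ext A
  refine ⟨fun (hA : IsBreakPast D A) => ⟨sInf Aᶜ, ?_, hA.eq_Iio.symm⟩, ?_⟩
  · exact isBreakPast_Iio_iff.mp (hA.eq_Iio ▸ hA)
  · rintro ⟨k, hk, rfl⟩
    exact isBreakPast_Iio_iff.mpr hk

theorem mem_Binf_iff_frequently_isBreakAt : D ∈ Binf ↔ ∃ᶠ k in atTop, D.IsBreakAt k := by
  change {A | IsBreakPast D A}.Infinite ↔ _
  rw [setOf_isBreakPast_eq_image,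
    infinite_image_iff Iio_injective.injOn, ← Nat.frequently_atTop_iff_infinite]
  exact frequently_congr (Nat.eventually_pos.mono fun k hk => and_iff_right hk)

theorem mem_cyl_iff_restrict_eq {n : ℕ} {C : FinCauset n} : D ∈ cyl C ↔ D.restrict n = C := by
  refine ⟨fun hD => FinCauset.ext fun x y hx hy => ?_, fun hD x y hx hy => ?_⟩
  · simpa [restrict, hx, hy] using hD x y hx hy
  · simp [← hD, restrict, hx, hy]

theorem measurableSet_restrict_preimage {n : ℕ} {T : Set (FinCauset n)}
    (hT : ∀ C ∈ T, Principal C) :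
    MeasurableSet[principalCylAlgebra] ((restrict · n) ⁻¹' T) := by
  have hunion : (restrict · n) ⁻¹' T = ⋃ C ∈ T, cyl C := by
    ext D
    simp [mem_cyl_iff_restrict_eq]
  rw [hunion]
  exact MeasurableSet.biUnion T.to_countable fun C hC =>
    measurableSet_generateFrom ⟨n, C, hT C hC, rfl⟩

theorem principal_restrict_succ {n : ℕ} (h : ∀ a < n, D.rel a n) :
    Principal (D.restrict (n + 1)) := by
  refine ⟨n, ⟨n.lt_succ_self, fun y _ hny => ?_⟩, fun x ⟨hx, hmax⟩ => ?_⟩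
  · exact absurd (D.lt_of_rel n y hny.2.2) (by omega)
  · by_contra hxn
    exact hmax n n.lt_succ_self ⟨hx, n.lt_succ_self, h x (by omega)⟩

def principalBreakEvent (k n : ℕ) : Set Causet :=
  (restrict · (n + 1)) ⁻¹' {C | Principal C ∧ C.IsBreakAt k}

theorem measurableSet_principalBreakEvent (k n : ℕ) :
    MeasurableSet[principalCylAlgebra] (principalBreakEvent k n) :=
  measurableSet_restrict_preimage fun _ hC => hC.1

theorem mem_principalBreakEvent {k n : ℕ} (hk : D.IsBreakAt k) (hn : D.IsBreakAt n) :
    D ∈ principalBreakEvent k n :=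
  ⟨principal_restrict_succ fun a ha => hn a ha n le_rfl,
    fun a ha b hkb hb => ⟨by omega, hb, hk a ha b hkb⟩⟩

theorem isBreakAt_of_frequently_mem_principalBreakEvent {k : ℕ}
    (h : ∃ᶠ n in atTop, D ∈ principalBreakEvent k n) : D.IsBreakAt k := by
  intro a ha b hkb
  obtain ⟨n, ⟨-, hbreak⟩, hbn⟩ := (h.and_eventually (eventually_ge_atTop b)).exists
  exact (hbreak a ha b hkb (Nat.lt_succ_of_le hbn)).2.2

theorem Binf_eq_limsup_principalBreakEvent :
    Binf = limsup (fun k => limsup (principalBreakEvent k) atTop) atTop := by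
  ext D
  simp only [mem_limsup_iff_frequently_mem, mem_Binf_iff_frequently_isBreakAt]
  exact ⟨fun h => h.mono fun k hk => h.mono fun n hn => mem_principalBreakEvent hk hn,
    fun h => h.mono fun k hk => isBreakAt_of_frequently_mem_principalBreakEvent hk⟩

end Causet

/-- B_∞ ∈ 𝔐_b. -/
theorem stmt_9 : MeasurableSet[principalCylAlgebra] Binf := by
  let _ := principalCylAlgebra
  rw [Causet.Binf_eq_limsup_principalBreakEvent]
  exact .measurableSet_limsup fun k =>
    .measurableSet_limsup fun n => Causet.measurableSet_principalBreakEvent k n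
end

section
/- For any two causets D, E ∈ B_∞ (each with infinitely many breaks) that are not order-isomorphic, there exists a principal finite order C such that D ∈ stem(C) and E ∉ stem(C). -/
open MeasurableSpace MeasureTheory Set

/-!
If `D` has a break at `j`, then `j` lies above every smaller label, so the initial segment
`{0, …, j}` of `D` is a principal stem. If all of these were stems of `E`, we would get stem
embeddings `φₙ` of `{0, …, n-1}` into `E` for every `n`. A stem of `E` with at most `j` elements
lies inside the past `{0, …, j-1}` of a break of `E` at `j`, and one with at least `j` elements
contains it. The first fact bounds each `φₙ x` independently of `n`, so by compactness (König)
some `F : ℕ → ℕ` agrees with `φₙ` on any `{0, …, N-1}` for infinitely many `n`; this `F` is an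
order embedding of `D` into `E`, and the second fact makes it onto.
-/

open Filter

/-- For `0 < j`: `X` has a break with past `{0, …, j-1}`; vacuous for `j = 0`. -/
def BreakAt (X : Causet) (j : ℕ) : Prop := ∀ a b, a < j → j ≤ b → X.rel a b

lemma IsBreakPast.exists_eq_Iio {X : Causet} {A : Set ℕ} (hA : IsBreakPast X A) :
    ∃ j, A = Iio j ∧ BreakAt X j := by
  obtain ⟨hne, ⟨b₀, hb₀⟩, hrel⟩ := hA
  have hfin : A.Finite :=
    (finite_Iio b₀).subset fun a ha => X.lt_of_rel a b₀ (hrel a ha b₀ hb₀)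
  obtain ⟨M, hM, hMmax⟩ := hfin.exists_maximal hne
  have hA : A = Iio (M + 1) := by
    ext x
    simp only [mem_Iio, Nat.lt_succ_iff]
    refine ⟨fun hx => (le_total x M).elim id (hMmax hx), fun hx => ?_⟩
    by_contra hxA
    have := X.lt_of_rel M x (hrel M hM x hxA)
    omega
  refine ⟨M + 1, hA, fun a b ha hb => hrel a (hA ▸ ha) b ?_⟩
  rw [hA]
  exact not_lt.mpr hb

lemma exists_breakAt_gt {X : Causet} (hX : X ∈ Binf) (a : ℕ) : ∃ j, a < j ∧ BreakAt X j := by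
  have hsub : {A : Set ℕ | IsBreakPast X A} ⊆ Iio '' {j | BreakAt X j} := fun A hA => by
    obtain ⟨j, rfl, hj⟩ := hA.exists_eq_Iio
    exact ⟨j, hj, rfl⟩
  obtain ⟨j, hj, hlt⟩ := (Infinite.of_image _ (hX.mono hsub)).exists_gt a
  exact ⟨j, hlt, hj⟩

lemma isStem_Iio (X : Causet) (n : ℕ) : IsStem X (Iio n) :=
  ⟨finite_Iio n, fun x y hy hxy => (X.lt_of_rel x y hxy).trans hy⟩

namespace IsStem

variable {X : Causet} {T : Set ℕ} {j : ℕ}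

lemma subset_Iio (hT : IsStem X T) (hj : BreakAt X j) (hcard : T.ncard ≤ j) : T ⊆ Iio j := by
  intro t ht
  by_contra hge
  have hsub : insert t (Iio j) ⊆ T := by
    rintro a (rfl | ha)
    · exact ht
    · exact hT.2 a t ht (hj a t ha (not_lt.mp hge))
  have := ncard_le_ncard hsub hT.1
  rw [ncard_insert_of_notMem hge (finite_Iio j), ncard_Iio_nat] at this
  omega

lemma Iio_subset (hT : IsStem X T) (hj : BreakAt X j) (hcard : j ≤ T.ncard) : Iio j ⊆ T := by
  intro x hx
  by_contra hxT
  have hsub : T ⊆ Iio j \ {x} := fun t ht =>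
    ⟨not_le.mp fun hge => hxT (hT.2 x t ht (hj x t hx hge)), fun h => hxT (h ▸ ht)⟩
  have := ncard_le_ncard hsub (finite_Iio j).sdiff
  rw [ncard_sdiff_singleton_of_mem hx, ncard_Iio_nat] at this
  have : 0 < j := (Nat.zero_le x).trans_lt hx
  omega

end IsStem

def Causet.restrict_s13 (X : Causet) (n : ℕ) : FinCauset n where
  rel x y := x < n ∧ y < n ∧ X.rel x y
  bounded _ _ h := ⟨h.1, h.2.1⟩
  irrefl x h := X.irrefl x h.2.2
  trans _ _ _ h₁ h₂ := ⟨h₁.1, h₂.2.1, X.trans _ _ _ h₁.2.2 h₂.2.2⟩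
  lt_of_rel x y h := X.lt_of_rel x y h.2.2

lemma principal_restrict_of_breakAt {X : Causet} {j : ℕ} (hj : BreakAt X j) :
    Principal (X.restrict_s13 (j + 1)) := by
  refine ⟨j, ⟨j.lt_succ_self, fun y hy hrel => ?_⟩, fun x ⟨hx, hxmax⟩ => ?_⟩
  · have := X.lt_of_rel _ _ hrel.2.2
    omega
  · by_contra hxj
    exact hxmax j j.lt_succ_self ⟨hx, j.lt_succ_self, hj x j (by omega) le_rfl⟩

lemma mem_stemSet_restrict (X : Causet) (n : ℕ) : X ∈ stemSet (X.restrict_s13 n) :=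
  ⟨Iio n, isStem_Iio X n, ⟨fun x => ⟨x.1, x.2⟩, fun x => ⟨x.1, x.2⟩, fun _ => rfl, fun _ => rfl⟩,
    fun x y => ⟨fun h => h.2.2, fun h => ⟨x.2, y.2, h⟩⟩⟩

structure IsStemEmbedding (D E : Causet) (n : ℕ) (φ : ℕ → ℕ) : Prop where
  injOn : InjOn φ (Iio n)
  isStem : IsStem E (φ '' Iio n)
  rel_iff : ∀ x y, x < n → y < n → (D.rel x y ↔ E.rel (φ x) (φ y))

lemma exists_isStemEmbedding_of_mem_stemSet {D E : Causet} {n : ℕ}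
    (h : E ∈ stemSet (D.restrict_s13 n)) : ∃ φ, IsStemEmbedding D E n φ := by
  classical
  obtain ⟨T, hT, ψ, hψ⟩ := h
  let φ : ℕ → ℕ := fun x => if hx : x < n then ψ ⟨x, hx⟩ else 0
  have hφ : ∀ x (hx : x < n), φ x = ψ ⟨x, hx⟩ := fun x hx => dif_pos hx
  have himage : φ '' Iio n = T := by
    ext t
    refine ⟨?_, fun ht => ⟨ψ.symm ⟨t, ht⟩, (ψ.symm ⟨t, ht⟩).2, ?_⟩⟩
    · rintro ⟨x, hx, rfl⟩
      rw [hφ x hx]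
      exact (ψ ⟨x, hx⟩).2
    · rw [hφ _ (ψ.symm ⟨t, ht⟩).2]
      simp
  refine ⟨φ, fun x hx y hy hxy => ?_, himage ▸ hT, fun x y hx hy => ?_⟩
  · rw [hφ x hx, hφ y hy] at hxy
    exact congrArg Subtype.val (ψ.injective (Subtype.ext hxy))
  · rw [hφ x hx, hφ y hy, ← hψ ⟨x, hx⟩ ⟨y, hy⟩]
    exact ⟨fun h => ⟨hx, hy, h⟩, fun h => h.2.2⟩

namespace IsStemEmbedding

variable {D E : Causet} {n : ℕ} {φ : ℕ → ℕ}

lemma mono (h : IsStemEmbedding D E n φ) {m : ℕ} (hmn : m ≤ n) : IsStemEmbedding D E m φ := by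
  have hsub : Iio m ⊆ Iio n := Iio_subset_Iio hmn
  refine ⟨h.injOn.mono hsub, ⟨(finite_Iio m).image φ, ?_⟩,
    fun x y hx hy => h.rel_iff x y (hsub hx) (hsub hy)⟩
  rintro z _ ⟨y, hy, rfl⟩ hzy
  obtain ⟨x, hx, rfl⟩ := h.isStem.2 z (φ y) ⟨y, hsub hy, rfl⟩ hzy
  exact ⟨x, (D.lt_of_rel x y ((h.rel_iff x y hx (hsub hy)).mpr hzy)).trans hy, rfl⟩

lemma ncard_image (h : IsStemEmbedding D E n φ) : (φ '' Iio n).ncard = n := by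
  rw [h.injOn.ncard_image, ncard_Iio_nat]

lemma lt_of_breakAt (h : IsStemEmbedding D E n φ) {j x : ℕ} (hj : BreakAt E j) (hxn : x < n)
    (hxj : x < j) : φ x < j := by
  have h' := h.mono hxn
  exact h'.isStem.subset_Iio hj (h'.ncard_image.trans_le hxj) ⟨x, x.lt_succ_self, rfl⟩

lemma Iio_subset_image_of_breakAt (h : IsStemEmbedding D E n φ) {j : ℕ} (hj : BreakAt E j)
    (hjn : j ≤ n) : Iio j ⊆ φ '' Iio j := by
  have h' := h.mono hjn
  exact h'.isStem.Iio_subset hj h'.ncard_image.ge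

end IsStemEmbedding

/-- König's lemma for coordinatewise eventually bounded sequences in `ℕ → ℕ`. -/
lemma exists_frequently_eqOn_Iio {φ : ℕ → ℕ → ℕ} (hφ : ∀ x, ∃ b, ∀ᶠ n in atTop, φ n x < b) :
    ∃ F : ℕ → ℕ, ∀ N, ∃ᶠ n in atTop, EqOn (φ n) F (Iio N) := by
  let U := hyperfilter ℕ
  have hU : (U : Filter ℕ) ≤ atTop := Nat.cofinite_eq_atTop ▸ hyperfilter_le_cofinite
  have hlim : ∀ x, ∃ v, ∀ᶠ n in U, φ n x = v := fun x => by
    obtain ⟨b, hb⟩ := hφ x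
    obtain ⟨v, -, hv⟩ := (U.map fun n => φ n x).eq_pure_of_finite_mem (finite_Iio b) (hU hb)
    exact ⟨v, Ultrafilter.mem_map.mp (hv ▸ Ultrafilter.mem_pure.mpr (mem_singleton v))⟩
  choose F hF using hlim
  exact ⟨F, fun N => (((finite_Iio N).eventually_all.mpr fun x _ => hF x).frequently).filter_mono hU⟩

lemma iso_of_forall_isStemEmbedding {D E : Causet} (hE : ∀ a, ∃ j, a < j ∧ BreakAt E j)
    (hemb : ∀ n, ∃ φ, IsStemEmbedding D E n φ) : Iso D E := by
  choose φ hφ using hemb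
  choose b hb hbE using hE
  obtain ⟨F, hF⟩ := exists_frequently_eqOn_Iio (φ := φ) fun x =>
    ⟨b x, eventually_gt_atTop x |>.mono fun n hn => (hφ n).lt_of_breakAt (hbE x) hn (hb x)⟩
  have hagree : ∀ N, ∃ n, N ≤ n ∧ EqOn (φ n) F (Iio N) := fun N => frequently_atTop.mp (hF N) N
  have hpair : ∀ x y, ∃ n, EqOn (φ n) F (Iio (max x y + 1)) ∧ x < n ∧ y < n := fun x y => by
    obtain ⟨n, hn, heq⟩ := hagree (max x y + 1)
    exact ⟨n, heq, by omega, by omega⟩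
  have hinj : Function.Injective F := fun x y hxy => by
    obtain ⟨n, heq, hx, hy⟩ := hpair x y
    refine (hφ n).injOn hx hy ?_
    rw [heq (by simp : x < max x y + 1), heq (by simp : y < max x y + 1), hxy]
  have hsurj : Function.Surjective F := fun t => by
    obtain ⟨n, hn, heq⟩ := hagree (b t)
    obtain ⟨x, hx, hxt⟩ := (hφ n).Iio_subset_image_of_breakAt (hbE t) hn (hb t)
    exact ⟨x, heq hx ▸ hxt⟩
  refine ⟨Equiv.ofBijective F ⟨hinj, hsurj⟩, fun x y => ?_⟩
  obtain ⟨n, heq, hx, hy⟩ := hpair x y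
  change D.rel x y ↔ E.rel (F x) (F y)
  rw [← heq (by simp : x < max x y + 1), ← heq (by simp : y < max x y + 1)]
  exact (hφ n).rel_iff x y hx hy

/-- For non-isomorphic D, E ∈ B_∞ there is a principal finite
order C with D ∈ stem(C) and E ∉ stem(C). -/
theorem stmt_13 (D E : Causet) (hD : D ∈ Binf) (hE : E ∈ Binf)
    (hne : ¬ Iso D E) :
    ∃ n, ∃ C : FinCauset n, Principal C ∧ D ∈ stemSet C ∧ E ∉ stemSet C := by
  by_contra! hcon
  refine hne (iso_of_forall_isStemEmbedding (exists_breakAt_gt hE) fun n => ?_)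
  obtain ⟨j, hnj, hj⟩ := exists_breakAt_gt hD n
  obtain ⟨φ, hφ⟩ := exists_isStemEmbedding_of_mem_stemSet
    (hcon _ _ (principal_restrict_of_breakAt hj) (mem_stemSet_restrict D (j + 1)))
  exact ⟨φ, hφ.mono (by omega)⟩
end
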